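/- arXiv:2308.14198 — 4 statements merged into one kernel-verified Lean document; each statement's English description precedes it below -/
import Mathlib

section
/- Pentagonal Number Theorem: as formal power series, Π_{n≥1}(1 − qⁿ) = Σ_{d=−∞}^{∞} (−1)^d q^{(3d²−d)/2}. -/
open Finset PowerSeries

lemma step1 (d : ℕ) :
    PowerSeries.coeff (R := ℚ) d (∏ n ∈ Finset.Icc 1 d, (1 - (PowerSeries.X : PowerSeries ℚ) ^ n)) =
      ∑ S ∈ (Finset.Icc 1 d).powerset.filter (fun S => S.sum id = d), (-1 : ℚ) ^ S.card := by
  classical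
  rw [PowerSeries.coeff_prod]
  have hc : ∀ i ∈ Finset.Icc 1 d, ∀ k : ℕ,
      PowerSeries.coeff (R := ℚ) k (1 - (PowerSeries.X : PowerSeries ℚ) ^ i)
        = (if k = 0 then 1 else 0) - (if k = i then 1 else 0) := by
    intro i hi k
    rw [map_sub, PowerSeries.coeff_one, PowerSeries.coeff_X_pow]
  rw [← Finset.sum_filter_add_sum_filter_not _ (fun l => ∀ i ∈ l.support, l i = i)]
  have hbad : ∑ l ∈ (finsuppAntidiag (Icc 1 d) d).filter
      (fun l => ¬ ∀ i ∈ l.support, l i = i), ∏ i ∈ Icc 1 d,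
      PowerSeries.coeff (R := ℚ) (l i) (1 - (PowerSeries.X : PowerSeries ℚ) ^ i) = 0 := by
    apply Finset.sum_eq_zero
    intro l hl
    simp only [mem_filter, mem_finsuppAntidiag, not_forall] at hl
    obtain ⟨⟨hsum, hsupp⟩, i, hi, hne⟩ := hl
    refine Finset.prod_eq_zero (hsupp hi) ?_
    rw [hc i (hsupp hi) (l i)]
    have h0 : l i ≠ 0 := Finsupp.mem_support_iff.mp hi
    rw [if_neg h0, if_neg hne]
    ring
  rw [hbad, add_zero]
  refine Finset.sum_bij' (fun l _ => l.support)
    (fun S _ => Finsupp.indicator S (fun i _ => i)) ?_ ?_ ?_ ?_ ?_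
  · intro l hl
    simp only [mem_filter, mem_finsuppAntidiag] at hl
    obtain ⟨⟨hsum, hsupp⟩, hgood⟩ := hl
    simp only [mem_powerset, mem_filter]
    refine ⟨hsupp, ?_⟩
    rw [← hsum, ← Finset.sum_subset hsupp (fun x _ hx => Finsupp.notMem_support_iff.mp hx)]
    exact Finset.sum_congr rfl (fun i hi => (hgood i hi).symm)
  · intro S hS
    simp only [mem_powerset, mem_filter] at hS
    obtain ⟨hsub, hsum⟩ := hS
    have hsupp : (Finsupp.indicator S (fun i _ => i)).support = S := by
      ext i
      simp only [Finsupp.mem_support_iff]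
      constructor
      · intro h
        by_contra hi
        exact h (Finsupp.indicator_of_notMem hi _)
      · intro hi
        rw [Finsupp.indicator_of_mem hi]
        have : 1 ≤ i := (Finset.mem_Icc.mp (hsub hi)).1
        omega
    simp only [mem_filter, mem_finsuppAntidiag, hsupp]
    refine ⟨⟨?_, hsub⟩, ?_⟩
    · rw [← Finset.sum_subset hsub (fun x _ hx => Finsupp.indicator_of_notMem hx _), ← hsum]
      exact Finset.sum_congr rfl (fun i hi => Finsupp.indicator_of_mem hi _)
    · intro i hi
      exact Finsupp.indicator_of_mem hi _
  · intro l hl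
    simp only [mem_filter] at hl
    ext i
    by_cases hi : i ∈ l.support
    · rw [Finsupp.indicator_of_mem hi, hl.2 i hi]
    · rw [Finsupp.indicator_of_notMem hi]
      exact (Finsupp.notMem_support_iff.mp hi).symm
  · intro S hS
    simp only [mem_powerset, mem_filter] at hS
    ext i
    simp only [Finsupp.mem_support_iff]
    constructor
    · intro h
      by_contra hi
      exact h (Finsupp.indicator_of_notMem hi _)
    · intro hi
      rw [Finsupp.indicator_of_mem hi]
      have : 1 ≤ i := (Finset.mem_Icc.mp (hS.1 hi)).1
      omega
  · intro l hl
    simp only [mem_filter, mem_finsuppAntidiag] at hl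
    obtain ⟨⟨hsum, hsupp⟩, hgood⟩ := hl
    show ∏ i ∈ Icc 1 d, PowerSeries.coeff (R := ℚ) (l i) (1 - (PowerSeries.X : PowerSeries ℚ) ^ i)
      = (-1 : ℚ) ^ l.support.card
    have hout : ∀ i ∈ Icc 1 d, i ∉ l.support →
        PowerSeries.coeff (R := ℚ) (l i) (1 - (PowerSeries.X : PowerSeries ℚ) ^ i) = 1 := by
      intro i hi hni
      rw [hc i hi (l i), Finsupp.notMem_support_iff.mp hni, if_pos rfl, if_neg]
      · ring
      · have : 1 ≤ i := (Finset.mem_Icc.mp hi).1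
        omega
    rw [← Finset.prod_subset hsupp hout]
    rw [Finset.prod_congr rfl (fun i hi => ?_), Finset.prod_const]
    rw [hc i (hsupp hi) (l i), hgood i hi, if_neg, if_pos rfl]
    · ring
    · have : 1 ≤ i := (Finset.mem_Icc.mp (hsupp hi)).1
      omega

open Finset

namespace Pent

noncomputable section
open scoped Classical
set_option linter.unusedSectionVars false

def mm (S : Finset ℕ) : ℕ := sSup (S : Set ℕ)
def ss (S : Finset ℕ) : ℕ := sInf (S : Set ℕ)
def rr (S : Finset ℕ) : ℕ := sInf {x | Finset.Icc x (mm S) ⊆ S}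
def tt (S : Finset ℕ) : ℕ := mm S + 1 - rr S

def opA (S : Finset ℕ) : Finset ℕ :=
  insert (mm S + 1) ((S.erase (ss S)).erase (mm S + 1 - ss S))
def opB (S : Finset ℕ) : Finset ℕ :=
  insert (tt S) (insert (mm S - tt S) (S.erase (mm S)))

def g (S : Finset ℕ) : Finset ℕ := if ss S + rr S ≤ mm S + 1 then opA S else opB S

def Exc (S : Finset ℕ) : Prop :=
  ∃ j : ℕ, S = Finset.Icc (j+1) (2*j) ∨ S = Finset.Icc (j+1) (2*j+1)

variable {S : Finset ℕ}

section basic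
variable (hne : S.Nonempty) (h0 : 0 ∉ S)
include hne

lemma mm_mem : mm S ∈ S := by
  have := Nat.sSup_mem (s := (S : Set ℕ)) (by simpa using hne) S.finite_toSet.bddAbove
  exact Finset.mem_coe.mp this

lemma le_mm {x : ℕ} (hx : x ∈ S) : x ≤ mm S :=
  le_csSup S.finite_toSet.bddAbove (by simpa using hx)

lemma ss_mem : ss S ∈ S := by
  have := Nat.sInf_mem (s := (S : Set ℕ)) (by simpa using hne)
  exact Finset.mem_coe.mp this

lemma ss_le {x : ℕ} (hx : x ∈ S) : ss S ≤ x := Nat.sInf_le (by simpa using hx)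

lemma Icc_rr_subset : Finset.Icc (rr S) (mm S) ⊆ S := by
  have h : mm S ∈ {x | Finset.Icc x (mm S) ⊆ S} := by
    intro y hy
    simp only [Finset.mem_Icc] at hy
    have : y = mm S := le_antisymm hy.2 hy.1
    subst this; exact mm_mem hne
  exact Nat.sInf_mem ⟨mm S, h⟩

lemma rr_le_mm : rr S ≤ mm S := by
  apply Nat.sInf_le
  intro y hy
  simp only [Finset.mem_Icc] at hy
  have : y = mm S := le_antisymm hy.2 hy.1
  subst this; exact mm_mem hne

lemma rr_mem : rr S ∈ S :=
  Icc_rr_subset hne (Finset.mem_Icc.mpr ⟨le_rfl, rr_le_mm hne⟩)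

lemma ss_le_rr : ss S ≤ rr S := ss_le hne (rr_mem hne)

include h0

lemma ss_pos : 1 ≤ ss S := by
  rcases Nat.eq_zero_or_pos (ss S) with h | h
  · exact absurd (h ▸ ss_mem hne) h0
  · exact h

lemma rr_pos : 1 ≤ rr S := le_trans (ss_pos hne h0) (ss_le_rr hne)

lemma rr_pred_not_mem : rr S - 1 ∉ S := by
  intro h
  have hr1 : rr S - 1 ∈ {x | Finset.Icc x (mm S) ⊆ S} := by
    intro y hy
    simp only [Finset.mem_Icc] at hy
    rcases Nat.eq_or_lt_of_le hy.1 with h' | h'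
    · exact h'.symm ▸ h
    · exact Icc_rr_subset hne (Finset.mem_Icc.mpr ⟨by omega, hy.2⟩)
  have h2 : rr S ≤ rr S - 1 := Nat.sInf_le hr1
  have := rr_pos hne h0
  omega

-- interval: if ss S = rr S then S = Icc (ss S) (mm S)
lemma eq_Icc_of_ss_eq_rr (h : rr S ≤ ss S) : S = Finset.Icc (ss S) (mm S) := by
  apply Finset.Subset.antisymm
  · intro x hx
    exact Finset.mem_Icc.mpr ⟨ss_le hne hx, le_mm hne hx⟩
  · intro x hx
    simp only [Finset.mem_Icc] at hx
    exact Icc_rr_subset hne (Finset.mem_Icc.mpr ⟨le_trans h hx.1, hx.2⟩)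

end basic

lemma exc_empty : Exc (∅ : Finset ℕ) := ⟨0, Or.inl (by simp)⟩

lemma nonempty_of_not_exc (h : ¬ Exc S) : S.Nonempty := by
  rcases S.eq_empty_or_nonempty with rfl | h'
  · exact absurd exc_empty h
  · exact h'

end
end Pent

namespace Pent
open scoped Classical
set_option linter.unusedSectionVars false
open Finset

variable {S : Finset ℕ}

lemma mm_eq (h1 : ∀ x ∈ S, x ≤ a) (h2 : a ∈ S) : mm S = a :=
  le_antisymm (h1 _ (mm_mem ⟨a, h2⟩)) (le_mm ⟨a, h2⟩ h2)

lemma ss_eq (h1 : ∀ x ∈ S, a ≤ x) (h2 : a ∈ S) : ss S = a :=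
  le_antisymm (ss_le ⟨a, h2⟩ h2) (h1 _ (ss_mem ⟨a, h2⟩))

lemma rr_le_of (h1 : Finset.Icc a (mm S) ⊆ S) : rr S ≤ a := Nat.sInf_le h1

lemma rr_ge_of (hne : S.Nonempty) (h2 : a - 1 ∉ S) (h3 : 1 ≤ a) (h4 : a ≤ mm S + 1) :
    a ≤ rr S := by
  by_contra h
  push_neg at h
  exact h2 (Icc_rr_subset hne (Finset.mem_Icc.mpr ⟨by omega, by omega⟩))

lemma Icc_vals {a b : ℕ} (h1 : 1 ≤ a) (h2 : a ≤ b) :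
    mm (Finset.Icc a b) = b ∧ ss (Finset.Icc a b) = a ∧ rr (Finset.Icc a b) = a := by
  have hmem : a ∈ Finset.Icc a b := Finset.mem_Icc.mpr ⟨le_rfl, h2⟩
  have hmm : mm (Finset.Icc a b) = b :=
    mm_eq (fun x hx => (Finset.mem_Icc.mp hx).2) (Finset.mem_Icc.mpr ⟨h2, le_rfl⟩)
  refine ⟨hmm, ss_eq (fun x hx => (Finset.mem_Icc.mp hx).1) hmem, ?_⟩
  refine le_antisymm (rr_le_of (by rw [hmm])) (rr_ge_of ⟨a, hmem⟩ ?_ h1 (by omega))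
  intro h
  have := (Finset.mem_Icc.mp h).1
  omega

section caseA
variable (h0 : 0 ∉ S) (hnexc : ¬ Exc S) (hA : ss S + rr S ≤ mm S + 1)
include h0 hnexc hA

lemma A_two_ss_le : 2 * ss S ≤ mm S := by
  have hne := nonempty_of_not_exc hnexc
  by_contra h
  push_neg at h
  have hsm : ss S ≤ mm S := le_mm hne (ss_mem hne)
  have hsr : ss S ≤ rr S := ss_le_rr hne
  have hrs : rr S ≤ ss S := by omega
  have hS : S = Finset.Icc (ss S) (mm S) := eq_Icc_of_ss_eq_rr hne h0 hrs
  have hs1 : 1 ≤ ss S := ss_pos hne h0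
  have heq : Finset.Icc (ss S) (mm S) = Finset.Icc (ss S - 1 + 1) (2 * (ss S - 1) + 1) := by
    congr 1 <;> omega
  exact hnexc ⟨ss S - 1, Or.inr (hS.trans heq)⟩

lemma A_pack :
    (opA S).sum id = S.sum id ∧ 0 ∉ opA S ∧ ¬ Exc (opA S) ∧
      (¬ (ss (opA S) + rr (opA S) ≤ mm (opA S) + 1)) ∧ opB (opA S) = S ∧
      (opA S).card + 1 = S.card := by
  have hne := nonempty_of_not_exc hnexc
  have a1 : 2 * ss S ≤ mm S := A_two_ss_le h0 hnexc hA
  have hs1 : 1 ≤ ss S := ss_pos hne h0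
  have hsm : ss S ≤ mm S := le_mm hne (ss_mem hne)
  have hr1 : 1 ≤ rr S := rr_pos hne h0
  have hrm : rr S ≤ mm S := rr_le_mm hne
  have hsr : ss S ≤ rr S := ss_le_rr hne
  have hm1s : mm S + 1 - ss S ∈ S :=
    Icc_rr_subset hne (Finset.mem_Icc.mpr ⟨by omega, by omega⟩)
  have hsltm : ss S < mm S + 1 - ss S := by omega
  have hm1 : mm S + 1 ∉ S := fun h => by have := le_mm hne h; omega
  have hsmem := ss_mem hne
  have hmmem := mm_mem hne
  -- membership description of opA S
  have hmemA : ∀ x, x ∈ opA S ↔ x = mm S + 1 ∨ (x ∈ S ∧ x ≠ ss S ∧ x ≠ mm S + 1 - ss S) := by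
    intro x
    simp only [opA, Finset.mem_insert, Finset.mem_erase]
    tauto
  have hm1sne : mm S + 1 - ss S ∈ S.erase (ss S) :=
    Finset.mem_erase.mpr ⟨by omega, hm1s⟩
  have hnotin : mm S + 1 ∉ (S.erase (ss S)).erase (mm S + 1 - ss S) := by
    intro h
    exact hm1 (Finset.mem_of_mem_erase (Finset.mem_of_mem_erase h))
  -- sum
  have hsum : (opA S).sum id = S.sum id := by
    have e0 : (opA S).sum id = (mm S + 1) + ((S.erase (ss S)).erase (mm S + 1 - ss S)).sum id :=
      Finset.sum_insert hnotin
    have e1 : ((S.erase (ss S)).erase (mm S + 1 - ss S)).sum id + (mm S + 1 - ss S)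
        = (S.erase (ss S)).sum id := Finset.sum_erase_add _ _ hm1sne
    have e2 : (S.erase (ss S)).sum id + ss S = S.sum id := Finset.sum_erase_add _ _ hsmem
    omega
  -- card
  have hcard : (opA S).card + 1 = S.card := by
    have e0 : (opA S).card = ((S.erase (ss S)).erase (mm S + 1 - ss S)).card + 1 :=
      Finset.card_insert_of_notMem hnotin
    have e1 : ((S.erase (ss S)).erase (mm S + 1 - ss S)).card + 1 = (S.erase (ss S)).card :=
      Finset.card_erase_add_one hm1sne
    have e2 : (S.erase (ss S)).card + 1 = S.card := Finset.card_erase_add_one hsmem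
    omega
  have h0A : 0 ∉ opA S := by
    rw [hmemA]
    rintro (h | ⟨h, -⟩)
    · omega
    · exact h0 h
  -- values for T = opA S
  have hTne : (opA S).Nonempty := ⟨mm S + 1, (hmemA _).mpr (Or.inl rfl)⟩
  have hmmT : mm (opA S) = mm S + 1 := by
    apply mm_eq
    · intro x hx
      rcases (hmemA x).mp hx with rfl | ⟨hx, -, -⟩
      · omega
      · have := le_mm hne hx; omega
    · exact (hmemA _).mpr (Or.inl rfl)
  have hssT : ss S + 1 ≤ ss (opA S) := by
    have hmem := ss_mem hTne
    rcases (hmemA _).mp hmem with h | ⟨h, hne', -⟩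
    · omega
    · have := ss_le hne h; omega
  have hrrT : rr (opA S) = mm S + 2 - ss S := by
    apply le_antisymm
    · apply rr_le_of
      intro x hx
      rw [hmmT] at hx
      simp only [Finset.mem_Icc] at hx
      rcases Nat.eq_or_lt_of_le hx.2 with h | h
      · exact (hmemA x).mpr (Or.inl h)
      · refine (hmemA x).mpr (Or.inr ⟨Icc_rr_subset hne (Finset.mem_Icc.mpr ⟨by omega, by omega⟩),
          by omega, by omega⟩)
    · apply rr_ge_of hTne
      · intro h
        rcases (hmemA _).mp h with h' | ⟨-, -, h'⟩
        · omega
        · exact h' (by omega)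
      · omega
      · rw [hmmT]; omega
  have hcondT : ¬ (ss (opA S) + rr (opA S) ≤ mm (opA S) + 1) := by
    rw [hrrT, hmmT]; omega
  -- opB (opA S) = S
  have hopB : opB (opA S) = S := by
    have httT : tt (opA S) = ss S := by
      unfold tt
      rw [hrrT, hmmT]
      omega
    have h2 : mm (opA S) - tt (opA S) = mm S + 1 - ss S := by
      rw [httT, hmmT]
    rw [opB, h2, httT, hmmT]
    rw [opA, Finset.erase_insert hnotin, Finset.insert_erase hm1sne,
      Finset.insert_erase hsmem]
  -- not exceptional
  have hnexcT : ¬ Exc (opA S) := by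
    rintro ⟨j, hj | hj⟩
    · -- opA S = Icc (j+1) (2j)
      have hne' : (Finset.Icc (j+1) (2*j)).Nonempty := hj ▸ hTne
      have hj1 : j + 1 ≤ 2 * j := by
        rcases hne' with ⟨x, hx⟩
        have := Finset.mem_Icc.mp hx; omega
      obtain ⟨v1, v2, v3⟩ := Icc_vals (a := j+1) (b := 2*j) (by omega) hj1
      rw [← hj] at v1 v2 v3
      rw [hmmT] at v1
      rw [hrrT] at v3
      omega
    · have hj1 : j + 1 ≤ 2 * j + 1 := by omega
      obtain ⟨v1, v2, v3⟩ := Icc_vals (a := j+1) (b := 2*j+1) (by omega) hj1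
      rw [← hj] at v1 v2 v3
      rw [hmmT] at v1
      rw [hrrT] at v3
      omega
  exact ⟨hsum, h0A, hnexcT, hcondT, hopB, hcard⟩

end caseA
end Pent

namespace Pent
open scoped Classical
set_option linter.unusedSectionVars false
open Finset

variable {S : Finset ℕ}

section caseB
variable (h0 : 0 ∉ S) (hnexc : ¬ Exc S) (hB : ¬ (ss S + rr S ≤ mm S + 1))
include h0 hnexc hB

lemma B_two_rr_ge : mm S + 3 ≤ 2 * rr S := by
  have hne := nonempty_of_not_exc hnexc
  by_contra h
  push_neg at h
  have hsm : ss S ≤ mm S := le_mm hne (ss_mem hne)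
  have hsr : ss S ≤ rr S := ss_le_rr hne
  have hrm : rr S ≤ mm S := rr_le_mm hne
  have hrs : rr S ≤ ss S := by omega
  have hS : S = Finset.Icc (ss S) (mm S) := eq_Icc_of_ss_eq_rr hne h0 hrs
  have hr1 : 1 ≤ rr S := rr_pos hne h0
  have heq : Finset.Icc (ss S) (mm S) = Finset.Icc (rr S - 1 + 1) (2 * (rr S - 1)) := by
    congr 1 <;> omega
  exact hnexc ⟨rr S - 1, Or.inl (hS.trans heq)⟩

lemma B_pack :
    (opB S).sum id = S.sum id ∧ 0 ∉ opB S ∧ ¬ Exc (opB S) ∧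
      (ss (opB S) + rr (opB S) ≤ mm (opB S) + 1) ∧ opA (opB S) = S ∧
      (opB S).card = S.card + 1 := by
  have hne := nonempty_of_not_exc hnexc
  have b2 : mm S + 3 ≤ 2 * rr S := B_two_rr_ge h0 hnexc hB
  have hs1 : 1 ≤ ss S := ss_pos hne h0
  have hsm : ss S ≤ mm S := le_mm hne (ss_mem hne)
  have hrm : rr S ≤ mm S := rr_le_mm hne
  have hsr : ss S ≤ rr S := ss_le_rr hne
  have hr0 : 2 ≤ rr S := by omega
  have hm2 : 2 ≤ mm S := by omega
  have httv : tt S = mm S + 1 - rr S := rfl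
  have hts : tt S + 1 ≤ ss S := by omega
  have hsmem := ss_mem hne
  have hmmem := mm_mem hne
  have htnot : tt S ∉ S := fun h => by have := ss_le hne h; omega
  have hr1not : rr S - 1 ∉ S := rr_pred_not_mem hne h0
  have hmt : mm S - tt S = rr S - 1 := by omega
  have hmemB : ∀ x, x ∈ opB S ↔ x = tt S ∨ x = rr S - 1 ∨ (x ∈ S ∧ x ≠ mm S) := by
    intro x
    simp only [opB, Finset.mem_insert, Finset.mem_erase, hmt]
    tauto
  have hr1notE : rr S - 1 ∉ S.erase (mm S) := fun h => hr1not (Finset.mem_of_mem_erase h)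
  have htnotI : tt S ∉ insert (rr S - 1) (S.erase (mm S)) := by
    intro h
    rcases Finset.mem_insert.mp h with h | h
    · omega
    · exact htnot (Finset.mem_of_mem_erase h)
  have hopBeq : opB S = insert (tt S) (insert (rr S - 1) (S.erase (mm S))) := by
    rw [opB, hmt]
  have hsum : (opB S).sum id = S.sum id := by
    rw [hopBeq]
    have e0 : (insert (tt S) (insert (rr S - 1) (S.erase (mm S)))).sum id
        = tt S + (insert (rr S - 1) (S.erase (mm S))).sum id := Finset.sum_insert htnotI
    have e1 : (insert (rr S - 1) (S.erase (mm S))).sum id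
        = (rr S - 1) + (S.erase (mm S)).sum id := Finset.sum_insert hr1notE
    have e2 : (S.erase (mm S)).sum id + mm S = S.sum id := Finset.sum_erase_add _ _ hmmem
    omega
  have hcard : (opB S).card = S.card + 1 := by
    rw [hopBeq]
    have e0 := Finset.card_insert_of_notMem htnotI
    have e1 := Finset.card_insert_of_notMem hr1notE
    have e2 : (S.erase (mm S)).card + 1 = S.card := Finset.card_erase_add_one hmmem
    omega
  have h0B : 0 ∉ opB S := by
    rw [hmemB]
    rintro (h | h | ⟨h, -⟩)
    · omega
    · omega
    · exact h0 h
  have hTne : (opB S).Nonempty := ⟨tt S, (hmemB _).mpr (Or.inl rfl)⟩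
  have hmmT : mm (opB S) = mm S - 1 := by
    apply mm_eq
    · intro x hx
      rcases (hmemB x).mp hx with rfl | rfl | ⟨hx, hne'⟩
      · omega
      · omega
      · have := le_mm hne hx; omega
    · refine (hmemB _).mpr ?_
      rcases Nat.lt_or_ge (rr S) (mm S) with h | h
      · refine Or.inr (Or.inr ⟨Icc_rr_subset hne (Finset.mem_Icc.mpr ⟨by omega, by omega⟩),
          by omega⟩)
      · exact Or.inr (Or.inl (by omega))
  have hssT : ss (opB S) = tt S := by
    apply ss_eq
    · intro x hx
      rcases (hmemB x).mp hx with rfl | rfl | ⟨hx, -⟩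
      · omega
      · omega
      · have := ss_le hne hx; omega
    · exact (hmemB _).mpr (Or.inl rfl)
  have hrrT : rr (opB S) ≤ rr S - 1 := by
    apply rr_le_of
    intro x hx
    rw [hmmT] at hx
    simp only [Finset.mem_Icc] at hx
    refine (hmemB x).mpr ?_
    rcases Nat.eq_or_lt_of_le hx.1 with h | h
    · exact Or.inr (Or.inl h.symm)
    · exact Or.inr (Or.inr ⟨Icc_rr_subset hne (Finset.mem_Icc.mpr ⟨by omega, by omega⟩), by omega⟩)
  have hcondT : ss (opB S) + rr (opB S) ≤ mm (opB S) + 1 := by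
    rw [hssT, hmmT]; omega
  have hopA : opA (opB S) = S := by
    have e1 : mm (opB S) + 1 = mm S := by rw [hmmT]; omega
    have e2 : mm (opB S) + 1 - ss (opB S) = rr S - 1 := by rw [e1, hssT]; omega
    rw [opA, e2, e1, hssT, hopBeq, Finset.erase_insert htnotI,
      Finset.erase_insert hr1notE, Finset.insert_erase hmmem]
  have hnexcT : ¬ Exc (opB S) := by
    rintro ⟨j, hj | hj⟩
    · have hne' : (Finset.Icc (j+1) (2*j)).Nonempty := hj ▸ hTne
      have hj1 : j + 1 ≤ 2 * j := by
        rcases hne' with ⟨x, hx⟩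
        have := Finset.mem_Icc.mp hx; omega
      obtain ⟨v1, v2, v3⟩ := Icc_vals (a := j+1) (b := 2*j) (by omega) hj1
      rw [← hj] at v1 v2 v3
      rw [hmmT] at v1
      rw [hssT] at v2
      omega
    · have hj1 : j + 1 ≤ 2 * j + 1 := by omega
      obtain ⟨v1, v2, v3⟩ := Icc_vals (a := j+1) (b := 2*j+1) (by omega) hj1
      rw [← hj] at v1 v2 v3
      rw [hmmT] at v1
      rw [hssT] at v2
      omega
  exact ⟨hsum, h0B, hnexcT, hcondT, hopA, hcard⟩

end caseB
end Pent

namespace Pent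
open scoped Classical
set_option linter.unusedSectionVars false
open Finset

def D (d : ℕ) : Finset (Finset ℕ) :=
  (Finset.Icc 1 d).powerset.filter (fun S => S.sum id = d)

lemma mem_D_iff {d : ℕ} {S : Finset ℕ} : S ∈ D d ↔ (S.sum id = d ∧ 0 ∉ S) := by
  simp only [D, Finset.mem_filter, Finset.mem_powerset]
  constructor
  · rintro ⟨hsub, hsum⟩
    refine ⟨hsum, fun h => ?_⟩
    have := Finset.mem_Icc.mp (hsub h)
    omega
  · rintro ⟨hsum, h0⟩
    refine ⟨fun x hx => Finset.mem_Icc.mpr ⟨?_, ?_⟩, hsum⟩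
    · rcases Nat.eq_zero_or_pos x with rfl | h
      · exact absurd hx h0
      · exact h
    · calc x = id x := rfl
        _ ≤ S.sum id := Finset.single_le_sum (fun i _ => Nat.zero_le _) hx
        _ = d := hsum

lemma pent_inj {j k : ℤ} (h : 3*j^2 - j = 3*k^2 - k) : j = k := by
  have h2 : (j - k) * (3*(j+k) - 1) = 0 := by linear_combination h
  rcases mul_eq_zero.mp h2 with h3 | h3 <;> omega

lemma pent_bound {j : ℤ} {d : ℕ} (h : 3*j^2 - j = 2*(d:ℤ)) : -(d:ℤ) ≤ j ∧ j ≤ (d:ℤ) := by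
  have h1 : 0 ≤ j*(j-1) := by
    rcases le_or_gt 1 j with h' | h'
    · exact mul_nonneg (by omega) (by omega)
    · nlinarith [mul_nonneg (show (0:ℤ) ≤ -j by omega) (show (0:ℤ) ≤ 1-j by omega)]
  have h2 : 0 ≤ j*(j+1) := by
    rcases le_or_gt 0 j with h' | h'
    · exact mul_nonneg (by omega) (by omega)
    · nlinarith [mul_nonneg (show (0:ℤ) ≤ -j by omega) (show (0:ℤ) ≤ -(j+1) by omega)]
  constructor <;> nlinarith [h1, h2]

lemma gauss (a b : ℕ) (h : a ≤ b) :
    (∑ i ∈ Finset.Icc (a+1) b, i) * 2 + a*(a+1) = b*(b+1) := by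
  have key : (∑ i ∈ Finset.range (a+1), i) + (∑ i ∈ Finset.Icc (a+1) b, i)
      = ∑ i ∈ Finset.range (b+1), i := by
    rw [Finset.range_eq_Ico, ← Finset.Ico_add_one_right_eq_Icc]
    rw [Finset.range_eq_Ico]
    exact Finset.sum_Ico_consecutive (fun i : ℕ => i) (by omega) (by omega)
  have ga := Finset.sum_range_id_mul_two (a+1)
  have gb := Finset.sum_range_id_mul_two (b+1)
  simp only [Nat.add_sub_cancel] at ga gb
  nlinarith [key, ga, gb]

lemma neg_one_zpow_neg (k : ℕ) : ((-1 : ℚ)) ^ (-(k:ℤ)) = (-1 : ℚ) ^ k := by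
  rw [zpow_neg, zpow_natCast, ← inv_pow, inv_neg, inv_one]

lemma exc_char {d : ℕ} {S : Finset ℕ} (hd : S.sum id = d) (h : Exc S) :
    ∃ jz : ℤ, 3*jz^2 - jz = 2*(d:ℤ) ∧
      ((∃ k : ℕ, jz = -(k:ℤ) ∧ S = Finset.Icc (k+1) (2*k)) ∨
       (∃ k : ℕ, jz = (k:ℤ)+1 ∧ S = Finset.Icc (k+1) (2*k+1))) ∧
      (-1:ℚ)^S.card = (-1:ℚ)^jz := by
  obtain ⟨k, hk | hk⟩ := h
  · subst hk
    have hg := gauss k (2*k) (by omega)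
    have hsum : (Finset.Icc (k+1) (2*k)).sum id = d := hd
    have hn : 2*d = 3*k^2 + k := by
      have : (∑ i ∈ Finset.Icc (k+1) (2*k), i) = d := hsum
      nlinarith [hg, this]
    refine ⟨-(k:ℤ), ?_, Or.inl ⟨k, rfl, rfl⟩, ?_⟩
    · have hz : ((2*d : ℕ) : ℤ) = ((3*k^2 + k : ℕ) : ℤ) := Nat.cast_inj.mpr hn
      push_cast at hz
      linarith [hz]
    · rw [Nat.card_Icc]
      have : 2*k + 1 - (k+1) = k := by omega
      rw [this, neg_one_zpow_neg]
  · subst hk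
    have hg := gauss k (2*k+1) (by omega)
    have hsum : (Finset.Icc (k+1) (2*k+1)).sum id = d := hd
    have hn : 2*d = 3*k^2 + 5*k + 2 := by
      have : (∑ i ∈ Finset.Icc (k+1) (2*k+1), i) = d := hsum
      nlinarith [hg, this]
    refine ⟨(k:ℤ)+1, ?_, Or.inr ⟨k, rfl, rfl⟩, ?_⟩
    · have hz : ((2*d : ℕ) : ℤ) = ((3*k^2 + 5*k + 2 : ℕ) : ℤ) := Nat.cast_inj.mpr hn
      push_cast at hz
      linarith [hz]
    · rw [Nat.card_Icc]
      have h1 : 2*k + 1 + 1 - (k+1) = k + 1 := by omega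
      rw [h1]
      have h2 : ((k:ℤ)+1) = ((k+1 : ℕ) : ℤ) := by push_cast; ring
      rw [h2, zpow_natCast]

lemma exc_sum (d : ℕ) :
    ∑ S ∈ (D d).filter (fun S => Exc S), (-1:ℚ)^S.card
      = ∑ j ∈ Finset.Icc (-(d:ℤ)) (d:ℤ),
          if 3*j^2 - j = 2*(d:ℤ) then (-1:ℚ)^j else 0 := by
  by_cases hex : ∃ j : ℤ, 3*j^2 - j = 2*(d:ℤ)
  · obtain ⟨j₀, hj₀⟩ := hex
    have huniq : ∀ j : ℤ, 3*j^2 - j = 2*(d:ℤ) → j = j₀ := fun j hj =>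
      pent_inj (hj.trans hj₀.symm)
    -- RHS
    have hmem : j₀ ∈ Finset.Icc (-(d:ℤ)) (d:ℤ) := by
      have := pent_bound hj₀
      exact Finset.mem_Icc.mpr this
    have hRHS : ∑ j ∈ Finset.Icc (-(d:ℤ)) (d:ℤ),
        (if 3*j^2 - j = 2*(d:ℤ) then (-1:ℚ)^j else 0) = (-1:ℚ)^j₀ := by
      rw [Finset.sum_eq_single_of_mem j₀ hmem]
      · rw [if_pos hj₀]
      · intro b _ hb
        exact if_neg (fun h => hb (huniq b h))
    rw [hRHS]
    -- LHS : the filtered set is a single explicit interval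
    obtain ⟨k, hk⟩ : ∃ k : ℕ, j₀ = (k:ℤ)+1 ∨ j₀ = -(k:ℤ) := by
      rcases le_or_gt 1 j₀ with h' | h'
      · exact ⟨(j₀-1).toNat, by omega⟩
      · exact ⟨(-j₀).toNat, by omega⟩
    set S₀ : Finset ℕ := if j₀ = (k:ℤ)+1 then Finset.Icc (k+1) (2*k+1)
      else Finset.Icc (k+1) (2*k) with hS₀
    have hExcS₀ : Exc S₀ := by
      rw [hS₀]
      split_ifs
      · exact ⟨k, Or.inr rfl⟩
      · exact ⟨k, Or.inl rfl⟩
    have hsumS₀ : S₀.sum id = d := by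
      rcases hk with hk' | hk'
      · rw [hS₀, if_pos hk']
        have hg := gauss k (2*k+1) (by omega)
        have hz : 3*((k:ℤ)+1)^2 - ((k:ℤ)+1) = 2*(d:ℤ) := hk' ▸ hj₀
        have hn : 3*k^2 + 5*k + 2 = 2*d := by
          have := hz
          push_cast at this
          exact_mod_cast by nlinarith [this]
        have h2 : (∑ i ∈ Finset.Icc (k+1) (2*k+1), i) * 2 = 2*d := by nlinarith [hg, hn]
        have h3 : (Finset.Icc (k+1) (2*k+1)).sum id = ∑ i ∈ Finset.Icc (k+1) (2*k+1), i := rfl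
        omega
      · by_cases hkk : j₀ = (k:ℤ)+1
        · rw [hS₀, if_pos hkk]
          -- then -(k) = k+1, impossible
          exfalso; omega
        · rw [hS₀, if_neg hkk]
          have hg := gauss k (2*k) (by omega)
          have hz : 3*(-(k:ℤ))^2 - (-(k:ℤ)) = 2*(d:ℤ) := hk' ▸ hj₀
          have hn : 3*k^2 + k = 2*d := by
            have := hz
            push_cast at this
            exact_mod_cast by nlinarith [this]
          have h2 : (∑ i ∈ Finset.Icc (k+1) (2*k), i) * 2 = 2*d := by nlinarith [hg, hn]
          have h3 : (Finset.Icc (k+1) (2*k)).sum id = ∑ i ∈ Finset.Icc (k+1) (2*k), i := rfl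
          omega
    have h0S₀ : 0 ∉ S₀ := by
      rw [hS₀]
      split_ifs <;> (intro h; have := Finset.mem_Icc.mp h; omega)
    have hset : (D d).filter (fun S => Exc S) = {S₀} := by
      ext S
      simp only [Finset.mem_filter, Finset.mem_singleton]
      constructor
      · rintro ⟨hD, hExc⟩
        obtain ⟨hsum, h0⟩ := mem_D_iff.mp hD
        obtain ⟨jz, hjz, hform, -⟩ := exc_char hsum hExc
        have hjz0 : jz = j₀ := huniq _ hjz
        rcases hform with ⟨k', hk', rfl⟩ | ⟨k', hk', rfl⟩
        · -- S = Icc (k'+1) (2k'), jz = -k'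
          rcases hk with hkc | hkc
          · -- j₀ = k+1 ≥ 1 but jz = -k' ≤ 0 : only k' = 0... then j₀ = 0 = k+1 impossible
            exfalso; omega
          · have : k' = k := by omega
            subst this
            rw [hS₀, if_neg (by omega)]
        · rcases hk with hkc | hkc
          · have : k' = k := by omega
            subst this
            rw [hS₀, if_pos (by omega)]
          · exfalso; omega
      · rintro rfl
        exact ⟨mem_D_iff.mpr ⟨hsumS₀, h0S₀⟩, hExcS₀⟩
    rw [hset, Finset.sum_singleton]
    obtain ⟨jz, hjz, hform, hsign⟩ := exc_char hsumS₀ hExcS₀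
    rw [hsign, huniq _ hjz]
  · -- no pentagonal index : both sides vanish
    have hRHS : ∑ j ∈ Finset.Icc (-(d:ℤ)) (d:ℤ),
        (if 3*j^2 - j = 2*(d:ℤ) then (-1:ℚ)^j else 0) = 0 :=
      Finset.sum_eq_zero (fun j _ => if_neg (fun h => hex ⟨j, h⟩))
    rw [hRHS]
    apply Finset.sum_eq_zero
    intro S hS
    exfalso
    simp only [Finset.mem_filter] at hS
    obtain ⟨hD, hExc⟩ := hS
    obtain ⟨hsum, -⟩ := mem_D_iff.mp hD
    obtain ⟨jz, hjz, -, -⟩ := exc_char hsum hExc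
    exact hex ⟨jz, hjz⟩

end Pent

namespace Pent
open scoped Classical
set_option linter.unusedSectionVars false
open Finset

variable {S : Finset ℕ}

lemma g_pack (h0 : 0 ∉ S) (hnexc : ¬ Exc S) :
    (g S).sum id = S.sum id ∧ 0 ∉ g S ∧ ¬ Exc (g S) ∧ g (g S) = S ∧
      (-1:ℚ)^(g S).card = -((-1:ℚ)^S.card) := by
  by_cases hA : ss S + rr S ≤ mm S + 1
  · have hg : g S = opA S := if_pos hA
    obtain ⟨hsum, h0', hnexc', hcond', hopB', hcard'⟩ := A_pack h0 hnexc hA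
    rw [hg]
    refine ⟨hsum, h0', hnexc', ?_, ?_⟩
    · show (if ss (opA S) + rr (opA S) ≤ mm (opA S) + 1 then _ else _) = S
      rw [if_neg hcond']
      exact hopB'
    · rw [← hcard', pow_succ]
      ring
  · have hg : g S = opB S := if_neg hA
    obtain ⟨hsum, h0', hnexc', hcond', hopA', hcard'⟩ := B_pack h0 hnexc hA
    rw [hg]
    refine ⟨hsum, h0', hnexc', ?_, ?_⟩
    · show (if ss (opB S) + rr (opB S) ≤ mm (opB S) + 1 then _ else _) = S
      rw [if_pos hcond']
      exact hopA'
    · rw [hcard', pow_succ]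
      ring

lemma g_ne (h0 : 0 ∉ S) (hnexc : ¬ Exc S) : g S ≠ S := by
  intro h
  obtain ⟨-, -, -, -, hsign⟩ := g_pack h0 hnexc
  rw [h] at hsign
  have h2 : ((-1:ℚ)^S.card)^2 = 1 := by
    rcases Nat.even_or_odd S.card with he | he
    · rw [he.neg_one_pow]; norm_num
    · rw [he.neg_one_pow]; norm_num
  nlinarith [hsign, h2]

lemma sum_not_exc (d : ℕ) :
    ∑ S ∈ (D d).filter (fun S => ¬ Exc S), (-1:ℚ)^S.card = 0 := by
  apply Finset.sum_involution (fun S _ => g S)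
  · intro S hS
    simp only [Finset.mem_filter] at hS
    obtain ⟨hD, hnexc⟩ := hS
    obtain ⟨hsum, h0⟩ := mem_D_iff.mp hD
    obtain ⟨-, -, -, -, hsign⟩ := g_pack h0 hnexc
    rw [hsign]; ring
  · intro S hS _
    simp only [Finset.mem_filter] at hS
    obtain ⟨hD, hnexc⟩ := hS
    exact g_ne (mem_D_iff.mp hD).2 hnexc
  · intro S hS
    simp only [Finset.mem_filter] at hS ⊢
    obtain ⟨hD, hnexc⟩ := hS
    obtain ⟨hsum, h0⟩ := mem_D_iff.mp hD
    obtain ⟨hsum', h0', hnexc', -, -⟩ := g_pack h0 hnexc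
    exact ⟨mem_D_iff.mpr ⟨hsum'.trans hsum, h0'⟩, hnexc'⟩
  · intro S hS
    simp only [Finset.mem_filter] at hS
    obtain ⟨hD, hnexc⟩ := hS
    exact (g_pack (mem_D_iff.mp hD).2 hnexc).2.2.2.1

lemma main (d : ℕ) :
    ∑ S ∈ (D d), (-1:ℚ)^S.card
      = ∑ j ∈ Finset.Icc (-(d:ℤ)) (d:ℤ),
          if 3*j^2 - j = 2*(d:ℤ) then (-1:ℚ)^j else 0 := by
  rw [← Finset.sum_filter_add_sum_filter_not (D d) (fun S => Exc S), sum_not_exc, add_zero,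
    exc_sum]

end Pent

/-- Pentagonal Number Theorem: `∏_{n≥1}(1 − qⁿ) = ∑_{j∈ℤ} (−1)^j q^{(3j²−j)/2}` in `ℚ[[q]]`,
stated coefficient-wise.  For the coefficient of `q^d` only the factors with `n ≤ d` and the
indices `j` with `|j| ≤ d` can contribute. -/
theorem pentagonal_number_theorem :
    ∀ d : ℕ,
      PowerSeries.coeff (R := ℚ) d (∏ n ∈ Finset.Icc 1 d, (1 - (PowerSeries.X : PowerSeries ℚ) ^ n)) =
        ∑ j ∈ Finset.Icc (-(d : ℤ)) (d : ℤ),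
          if 3 * j ^ 2 - j = 2 * (d : ℤ) then (-1 : ℚ) ^ j else 0 := by
  intro d
  rw [step1 d]
  exact Pent.main d
end

section
/- As an identity of formal power series: Π_{n≥1}(1−qⁿ) · Σ_{d≥0} (24d − 1)·p(d)·qᵈ = −1 + 24·Σ_{n≥1} σ(n)·qⁿ, where p(d) is the partition function and σ(n) = σ₁(n) is the sum of divisors of n. (Equivalently, 24·⟨τ₀⟩ = 24·E₂.) -/
open PowerSeries Finset
open scoped Classical

namespace EulerPartitionAux

noncomputable section

/-- A convenience constructor for the power series whose coefficients indicate a subset. -/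
def indicatorSeries (α : Type*) [Semiring α] (s : Set ℕ) : PowerSeries α :=
  PowerSeries.mk fun n => if n ∈ s then 1 else 0

theorem coeff_indicator {α : Type*} (s : Set ℕ) [Semiring α] (n : ℕ) :
    coeff (R := α) n (indicatorSeries _ s) = if n ∈ s then 1 else 0 :=
  coeff_mk _ _

-- The main workhorse (copied from Archive/Wiedijk100Theorems/Partition.lean).
theorem partialGF_prop (α : Type*) [CommSemiring α] (n : ℕ) (s : Finset ℕ) (hs : ∀ i ∈ s, 0 < i)
    (c : ℕ → Set ℕ) (hc : ∀ i, i ∉ s → 0 ∈ c i) :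
    #{p : n.Partition | (∀ j, p.parts.count j ∈ c j) ∧ ∀ j ∈ p.parts, j ∈ s} =
      coeff (R := α) n (∏ i ∈ s, indicatorSeries α ((· * i) '' c i)) := by
  simp_rw [coeff_prod, coeff_indicator, prod_boole, sum_boole]
  apply congr_arg
  simp only [mem_univ, forall_true_left, not_and, not_forall, exists_prop,
    Set.mem_image, not_exists]
  set φ : (a : Nat.Partition n) →
    a ∈ filter (fun p ↦ (∀ (j : ℕ), Multiset.count j p.parts ∈ c j) ∧ ∀ j ∈ p.parts, j ∈ s) univ →
    ℕ →₀ ℕ := fun p _ => {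
      toFun := fun i => Multiset.count i p.parts • i
      support := Finset.filter (fun i => i ≠ 0) p.parts.toFinset
      mem_support_toFun := fun a => by
        simp only [smul_eq_mul, ne_eq, mul_eq_zero, Multiset.count_eq_zero]
        rw [not_or, not_not]
        simp only [Multiset.mem_toFinset, not_not, mem_filter] }
  refine Finset.card_bij φ ?_ ?_ ?_
  · intro a ha
    simp only [φ, not_forall, not_exists, not_and, exists_prop, mem_filter]
    rw [mem_finsuppAntidiag]
    dsimp only [ne_eq, smul_eq_mul, id_eq, eq_mpr_eq_cast, le_eq_subset, Finsupp.coe_mk]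
    simp only [mem_univ, forall_true_left, not_and, not_forall, exists_prop,
      mem_filter, true_and] at ha
    refine ⟨⟨?_, fun i ↦ ?_⟩, fun i _ ↦ ⟨a.parts.count i, ha.1 i, rfl⟩⟩
    · conv_rhs => simp [← a.parts_sum]
      rw [sum_multiset_count_of_subset _ s]
      · simp only [smul_eq_mul]
      · intro i
        simp only [Multiset.mem_toFinset, not_not, mem_filter]
        apply ha.2
    · simp only [ne_eq, Multiset.mem_toFinset, not_not, mem_filter, and_imp]
      exact fun hi _ ↦ ha.2 i hi
  · intro p₁ hp₁ p₂ hp₂ h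
    apply Nat.Partition.ext
    simp only [true_and, mem_univ, mem_filter] at hp₁ hp₂
    ext i
    simp only [φ, ne_eq, Multiset.mem_toFinset, not_not, smul_eq_mul, Finsupp.mk.injEq] at h
    by_cases hi : i = 0
    · rw [hi]
      rw [Multiset.count_eq_zero_of_notMem]
      · rw [Multiset.count_eq_zero_of_notMem]
        intro a; exact Nat.lt_irrefl 0 (hs 0 (hp₂.2 0 a))
      intro a; exact Nat.lt_irrefl 0 (hs 0 (hp₁.2 0 a))
    · rw [← mul_left_inj' hi]
      rw [funext_iff] at h
      exact h.2 i
  · simp only [φ, mem_filter, mem_finsuppAntidiag, mem_univ, exists_prop, true_and, and_assoc]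
    rintro f ⟨hf, hf₃, hf₄⟩
    have hf' : f ∈ finsuppAntidiag s n := mem_finsuppAntidiag.mpr ⟨hf, hf₃⟩
    simp only [mem_finsuppAntidiag] at hf'
    refine ⟨⟨∑ i ∈ s, Multiset.replicate (f i / i) i, ?_, ?_⟩, ?_, ?_, ?_⟩
    · intro i hi
      simp only [exists_prop, Multiset.mem_sum, mem_map, Function.Embedding.coeFn_mk] at hi
      rcases hi with ⟨t, ht, z⟩
      apply hs
      rwa [Multiset.eq_of_mem_replicate z]
    · simp_rw [Multiset.sum_sum, Multiset.sum_replicate, Nat.nsmul_eq_mul]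
      rw [← hf'.1]
      refine sum_congr rfl fun i hi => Nat.div_mul_cancel ?_
      rcases hf₄ i hi with ⟨w, _, hw₂⟩
      rw [← hw₂]
      exact dvd_mul_left _ _
    · intro i
      simp_rw [Multiset.count_sum', Multiset.count_replicate, sum_ite_eq']
      split_ifs with h
      · rcases hf₄ i h with ⟨w, hw₁, hw₂⟩
        rwa [← hw₂, Nat.mul_div_cancel _ (hs i h)]
      · exact hc _ h
    · intro i hi
      rw [Multiset.mem_sum] at hi
      rcases hi with ⟨j, hj₁, hj₂⟩
      rwa [Multiset.eq_of_mem_replicate hj₂]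
    · ext i
      simp_rw [Multiset.count_sum', Multiset.count_replicate, sum_ite_eq']
      simp only [ne_eq, Multiset.mem_toFinset, not_not, smul_eq_mul, ite_mul,
        zero_mul, Finsupp.coe_mk]
      split_ifs with h
      · apply Nat.div_mul_cancel
        rcases hf₄ i h with ⟨w, _, hw₂⟩
        apply Dvd.intro_left _ hw₂
      · apply symm
        rw [← Finsupp.notMem_support_iff]
        exact notMem_mono hf'.2 h


/-- The indicator series of multiples of `i`, i.e. the inverse of `1 - X^i`. -/
def ind (i : ℕ) : PowerSeries ℚ := PowerSeries.mk fun k => if i ∣ k then 1 else 0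

lemma coeff_ind (i k : ℕ) : coeff (R := ℚ) k (ind i) = if i ∣ k then 1 else 0 := coeff_mk _ _

lemma one_sub_X_pow_mul_ind {i : ℕ} (hi : 0 < i) :
    (1 - (X : PowerSeries ℚ) ^ i) * ind i = 1 := by
  ext k
  rw [sub_mul, one_mul, map_sub, coeff_ind, coeff_X_pow_mul' (ind i) i k, coeff_one]
  rcases Nat.eq_zero_or_pos k with rfl | hk
  · rw [if_pos (dvd_zero i), if_neg (by omega), if_pos rfl, sub_zero]
  · rw [if_neg hk.ne']
    by_cases hik : i ≤ k
    · rw [if_pos hik, coeff_ind]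
      have hiff : i ∣ k ↔ i ∣ k - i := by
        constructor
        · intro h; exact Nat.dvd_sub h dvd_rfl
        · intro h
          have := Nat.dvd_add h (dvd_refl i)
          rwa [Nat.sub_add_cancel hik] at this
      split_ifs with h1 h2 h2
      · ring
      · exact absurd (hiff.mp h1) h2
      · exact absurd (hiff.mpr h2) h1
      · ring
    · rw [if_neg hik, if_neg, sub_zero]
      intro h
      exact hik (Nat.le_of_dvd hk h)

lemma prod_mul_prod_ind (N : ℕ) :
    (∏ n ∈ Icc 1 N, (1 - (X : PowerSeries ℚ) ^ n)) * (∏ n ∈ Icc 1 N, ind n) = 1 := by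
  rw [← prod_mul_distrib]
  rw [Finset.prod_congr rfl (fun i hi => one_sub_X_pow_mul_ind (mem_Icc.mp hi).1)]
  exact prod_const_one

lemma card_partition_eq {N j : ℕ} (hj : j ≤ N) :
    ((Fintype.card (Nat.Partition j) : ℚ)) = coeff (R := ℚ) j (∏ n ∈ Icc 1 N, ind n) := by
  have h := partialGF_prop ℚ j (Icc 1 N) (fun i hi => (mem_Icc.mp hi).1)
    (fun _ => Set.univ) (fun _ _ => trivial)
  have hfilter :
      ({p : j.Partition | (∀ i, p.parts.count i ∈ (Set.univ : Set ℕ)) ∧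
        ∀ m ∈ p.parts, m ∈ Icc 1 N} : Finset _) = univ := by
    apply Finset.filter_true_of_mem
    intro p _
    refine ⟨fun _ => trivial, fun m hm => ?_⟩
    rw [mem_Icc]
    constructor
    · exact p.parts_pos hm
    · calc m ≤ j := by
            simpa [p.parts_sum] using Multiset.single_le_sum (fun _ _ => Nat.zero_le _) _ hm
        _ ≤ N := hj
  rw [hfilter] at h
  rw [Finset.card_univ] at h
  rw [h]
  apply congr_arg
  apply Finset.prod_congr rfl
  intro i _
  ext k
  rw [coeff_indicator, coeff_ind]
  congr 1
  simp only [Set.image_univ, Set.mem_range, eq_iff_iff]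
  constructor
  · rintro ⟨a, rfl⟩; exact Dvd.intro_left a rfl
  · rintro ⟨a, rfl⟩; exact ⟨a, mul_comm a i⟩


lemma coeff_mul_congr {d : ℕ} (C A B : PowerSeries ℚ)
    (h : ∀ j ≤ d, coeff (R := ℚ) j A = coeff (R := ℚ) j B) :
    coeff (R := ℚ) d (C * A) = coeff (R := ℚ) d (C * B) := by
  rw [coeff_mul, coeff_mul]
  apply Finset.sum_congr rfl
  rintro ⟨i, j⟩ hij
  rw [Finset.HasAntidiagonal.mem_antidiagonal] at hij
  rw [h j (by omega)]

lemma deriv_prod (s : Finset ℕ) (f : ℕ → PowerSeries ℚ) :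
    d⁄dX ℚ (∏ i ∈ s, f i) = ∑ i ∈ s, d⁄dX ℚ (f i) * ∏ m ∈ s.erase i, f m := by
  induction s using Finset.induction_on with
  | empty => simp
  | @insert a s ha ih =>
    rw [prod_insert ha, Derivation.leibniz, ih, sum_insert ha, erase_insert ha,
      smul_eq_mul, smul_eq_mul, mul_sum, add_comm]
    congr 1
    · ring
    apply Finset.sum_congr rfl
    intro i hi
    have hne : a ≠ i := fun h => ha (h ▸ hi)
    rw [Finset.erase_insert_of_ne hne,
      prod_insert (fun h => ha (Finset.mem_of_mem_erase h))]
    ring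

lemma X_mul_derivative_X_pow {n : ℕ} (hn : 0 < n) :
    (X : PowerSeries ℚ) * d⁄dX ℚ (X ^ n) = C (R := ℚ) (n : ℚ) * X ^ n := by
  have hcast : ((n : ℕ) : PowerSeries ℚ) = C (R := ℚ) (n : ℚ) := by
    rw [← map_natCast (C (R := ℚ)) n]
  rw [Derivation.leibniz_pow, derivative_X, smul_eq_mul, mul_one, nsmul_eq_mul, hcast]
  calc (X : PowerSeries ℚ) * (C (R := ℚ) (n : ℚ) * X ^ (n - 1))
      = C (R := ℚ) (n : ℚ) * (X * X ^ (n - 1)) := by ring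
    _ = C (R := ℚ) (n : ℚ) * X ^ n := by
        rw [← pow_succ', Nat.sub_add_cancel hn]

lemma key (N : ℕ) :
    (∏ n ∈ Icc 1 N, (1 - (X : PowerSeries ℚ) ^ n)) *
        ((X : PowerSeries ℚ) * d⁄dX ℚ (∏ n ∈ Icc 1 N, ind n)) =
      ∑ n ∈ Icc 1 N, C (R := ℚ) (n : ℚ) * ((X : PowerSeries ℚ) ^ n * ind n) := by
  set G := ∏ n ∈ Icc 1 N, (1 - (X : PowerSeries ℚ) ^ n) with hG
  set H := ∏ n ∈ Icc 1 N, ind n with hH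
  have hGH : G * H = 1 := prod_mul_prod_ind N
  have hD : G * d⁄dX ℚ H + H * d⁄dX ℚ G = 0 := by
    have h := congrArg (d⁄dX ℚ) hGH
    rw [Derivation.leibniz, smul_eq_mul, smul_eq_mul, Derivation.map_one_eq_zero] at h
    exact h
  have h1 : G * ((X : PowerSeries ℚ) * d⁄dX ℚ H) = -((X : PowerSeries ℚ) * (d⁄dX ℚ G * H)) := by
    have h2 : G * d⁄dX ℚ H = -(H * d⁄dX ℚ G) := by linear_combination hD
    calc G * ((X : PowerSeries ℚ) * d⁄dX ℚ H)
        = X * (G * d⁄dX ℚ H) := by ring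
      _ = X * (-(H * d⁄dX ℚ G)) := by rw [h2]
      _ = -((X : PowerSeries ℚ) * (d⁄dX ℚ G * H)) := by ring
  have hEr : ∀ n ∈ Icc 1 N,
      (∏ m ∈ (Icc 1 N).erase n, (1 - (X : PowerSeries ℚ) ^ m)) * H = ind n := by
    intro n hn
    have ha : (1 - (X : PowerSeries ℚ) ^ n) *
        ((∏ m ∈ (Icc 1 N).erase n, (1 - (X : PowerSeries ℚ) ^ m)) * H) = 1 := by
      rw [← mul_assoc,
        Finset.mul_prod_erase (Icc 1 N) (fun m => 1 - (X : PowerSeries ℚ) ^ m) hn, ← hG, hGH]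
    have hb : (1 - (X : PowerSeries ℚ) ^ n) * ind n = 1 :=
      one_sub_X_pow_mul_ind (mem_Icc.mp hn).1
    calc (∏ m ∈ (Icc 1 N).erase n, (1 - (X : PowerSeries ℚ) ^ m)) * H
        = ((∏ m ∈ (Icc 1 N).erase n, (1 - (X : PowerSeries ℚ) ^ m)) * H) *
            ((1 - (X : PowerSeries ℚ) ^ n) * ind n) := by rw [hb, mul_one]
      _ = ((1 - (X : PowerSeries ℚ) ^ n) *
            ((∏ m ∈ (Icc 1 N).erase n, (1 - (X : PowerSeries ℚ) ^ m)) * H)) * ind n := by ring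
      _ = ind n := by rw [ha, one_mul]
  rw [h1, hG, deriv_prod]
  rw [Finset.sum_mul, Finset.mul_sum, ← Finset.sum_neg_distrib]
  apply Finset.sum_congr rfl
  intro n hn
  have hn1 : 0 < n := (mem_Icc.mp hn).1
  have hdm : d⁄dX ℚ (1 - (X : PowerSeries ℚ) ^ n) = -(d⁄dX ℚ ((X : PowerSeries ℚ) ^ n)) := by
    rw [map_sub, Derivation.map_one_eq_zero, zero_sub]
  calc -((X : PowerSeries ℚ) *
        ((d⁄dX ℚ (1 - (X : PowerSeries ℚ) ^ n) *
          ∏ m ∈ (Icc 1 N).erase n, (1 - (X : PowerSeries ℚ) ^ m)) * H))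
      = ((X : PowerSeries ℚ) * d⁄dX ℚ ((X : PowerSeries ℚ) ^ n)) *
          ((∏ m ∈ (Icc 1 N).erase n, (1 - (X : PowerSeries ℚ) ^ m)) * H) := by
        rw [hdm]; ring
    _ = (C (R := ℚ) (n : ℚ) * (X : PowerSeries ℚ) ^ n) * ind n := by
        rw [X_mul_derivative_X_pow hn1, hEr n hn]
    _ = C (R := ℚ) (n : ℚ) * ((X : PowerSeries ℚ) ^ n * ind n) := by ring

end

end EulerPartitionAux

open EulerPartitionAux

lemma divisors_eq_filter (d : ℕ) :
    d.divisors = Finset.filter (fun n => n ∣ d) (Finset.Icc 1 d) := by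
  ext a
  simp only [Nat.mem_divisors, Finset.mem_filter, Finset.mem_Icc]
  constructor
  · rintro ⟨hdvd, hd⟩
    exact ⟨⟨Nat.pos_of_dvd_of_pos hdvd (Nat.pos_of_ne_zero hd), Nat.le_of_dvd (Nat.pos_of_ne_zero hd) hdvd⟩, hdvd⟩
  · rintro ⟨⟨h1, h2⟩, hdvd⟩
    exact ⟨hdvd, by omega⟩

/-- `∏_{n≥1}(1−qⁿ) · Σ_{d≥0} (24d − 1)·p(d)·qᵈ = −1 + 24·Σ_{n≥1} σ(n)·qⁿ` in `ℚ[[q]]`,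
stated coefficient-wise (factors `(1 - qⁿ)` with `n > d` do not affect the `q^d` coefficient).
Here `p` is the partition function and `σ(n)` the sum of divisors of `n`. -/
theorem euler_product_mul_partition_series :
    ∀ d : ℕ,
      PowerSeries.coeff (R := ℚ) d
          ((∏ n ∈ Finset.Icc 1 d, (1 - (PowerSeries.X : PowerSeries ℚ) ^ n)) *
            PowerSeries.mk (fun n : ℕ =>
              (24 * (n : ℚ) - 1) * (Fintype.card (Nat.Partition n) : ℚ))) =
        PowerSeries.coeff (R := ℚ) d
          (PowerSeries.mk fun n : ℕ =>
            if n = 0 then (-1 : ℚ) else 24 * ∑ i ∈ n.divisors, (i : ℚ)) := by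
  intro d
  have hsplit : PowerSeries.mk (fun n : ℕ =>
        (24 * (n : ℚ) - 1) * (Fintype.card (Nat.Partition n) : ℚ)) =
      (24 : ℚ) • PowerSeries.mk (fun n : ℕ => (n : ℚ) * (Fintype.card (Nat.Partition n) : ℚ)) -
        PowerSeries.mk (fun n : ℕ => (Fintype.card (Nat.Partition n) : ℚ)) := by
    ext k
    simp only [map_sub, map_smul, coeff_mk, smul_eq_mul]
    ring
  rw [hsplit, mul_sub, mul_smul_comm, map_sub, map_smul, smul_eq_mul]
  have hA : coeff (R := ℚ) d ((∏ n ∈ Icc 1 d, (1 - (X : PowerSeries ℚ) ^ n)) *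
      PowerSeries.mk (fun n : ℕ => (Fintype.card (Nat.Partition n) : ℚ))) =
      if d = 0 then (1 : ℚ) else 0 := by
    rw [coeff_mul_congr _ _ (∏ n ∈ Icc 1 d, ind n)
      (fun j hj => by rw [coeff_mk, card_partition_eq hj]), prod_mul_prod_ind d, coeff_one]
  have hB : coeff (R := ℚ) d ((∏ n ∈ Icc 1 d, (1 - (X : PowerSeries ℚ) ^ n)) *
      PowerSeries.mk (fun n : ℕ => (n : ℚ) * (Fintype.card (Nat.Partition n) : ℚ))) =
      ∑ i ∈ d.divisors, (i : ℚ) := by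
    rw [coeff_mul_congr _ _ ((X : PowerSeries ℚ) * d⁄dX ℚ (∏ n ∈ Icc 1 d, ind n)) ?hcongr]
    case hcongr =>
      intro j hj
      cases j with
      | zero => rw [coeff_mk, coeff_zero_X_mul]; simp
      | succ k =>
        rw [coeff_mk, coeff_succ_X_mul, coeff_derivative, ← card_partition_eq hj]
        push_cast
        ring
    rw [key d, map_sum]
    have hterm : ∀ n ∈ Icc 1 d,
        coeff (R := ℚ) d (C (R := ℚ) (n : ℚ) * ((X : PowerSeries ℚ) ^ n * ind n)) =
          if n ∣ d then (n : ℚ) else 0 := by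
      intro n hn
      obtain ⟨hn1, hnd⟩ := mem_Icc.mp hn
      rw [coeff_C_mul, coeff_X_pow_mul' _ n d, if_pos hnd, coeff_ind]
      have hiff : n ∣ d ↔ n ∣ d - n := by
        constructor
        · intro h; exact Nat.dvd_sub h dvd_rfl
        · intro h
          have := Nat.dvd_add h (dvd_refl n)
          rwa [Nat.sub_add_cancel hnd] at this
      by_cases h : n ∣ d
      · rw [if_pos (hiff.mp h), if_pos h, mul_one]
      · rw [if_neg (fun hc => h (hiff.mpr hc)), if_neg h, mul_zero]
    rw [Finset.sum_congr rfl hterm, ← Finset.sum_filter, ← divisors_eq_filter]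
  rw [hA, hB, coeff_mk]
  rcases eq_or_ne d 0 with rfl | hd
  · simp
  · rw [if_neg hd, if_neg hd]
    ring
end

section
/- The 4×7 rational matrix A₈ (given explicitly by rows [1/360, 1/36, 13/180, 1/12, −7/15, 7/180, −35/3], [19/2016, 115/504, 25/63, 73/112, 85/24, 25/9, 325/12], [1/24, −1/3, −2/3, −3/4, −6, −38/3, 75], [1/24, −5/6, −8/3, −15/4, 15/2, 40/3, −15]) has the property that a set of 4 of its columns is linearly independent over ℚ if and only if it is not the set of columns {2, 5, 6, 7}; in particular, exactly 34 of the 35 four-element subsets of columns form bases of ℚ⁴. -/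
open Matrix

/-- The matrix `A₈` of weight-8 stationary descendents expanded in the Eisenstein basis. -/
def A8 : Matrix (Fin 4) (Fin 7) ℚ :=
  !![1/360, 1/36, 13/180, 1/12, -7/15, 7/180, -35/3;
     19/2016, 115/504, 25/63, 73/112, 85/24, 25/9, 325/12;
     1/24, -1/3, -2/3, -3/4, -6, -38/3, 75;
     1/24, -5/6, -8/3, -15/4, 15/2, 40/3, -15]

/-- `10080 • A8`, as an integer matrix. -/
def B8 : Matrix (Fin 4) (Fin 7) ℤ :=
  !![28, 280, 728, 840, -4704, 392, -117600;
     95, 2300, 4000, 6570, 35700, 28000, 273000;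
     420, -3360, -6720, -7560, -60480, -127680, 756000;
     420, -8400, -26880, -37800, 75600, 134400, -151200]

lemma B8_eq (i : Fin 4) (j : Fin 7) : ((B8 i j : ℤ) : ℚ) = 10080 * A8 i j := by
  fin_cases i <;> fin_cases j <;> norm_num [A8, B8]

/-- Explicit determinant of a 4×4 matrix, over any commutative ring. -/
def det4 {R : Type*} [CommRing R] (M : Matrix (Fin 4) (Fin 4) R) : R :=
  M 0 0 * (M 1 1 * (M 2 2 * M 3 3 - M 2 3 * M 3 2) - M 1 2 * (M 2 1 * M 3 3 - M 2 3 * M 3 1)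
      + M 1 3 * (M 2 1 * M 3 2 - M 2 2 * M 3 1))
    - M 0 1 * (M 1 0 * (M 2 2 * M 3 3 - M 2 3 * M 3 2) - M 1 2 * (M 2 0 * M 3 3 - M 2 3 * M 3 0)
      + M 1 3 * (M 2 0 * M 3 2 - M 2 2 * M 3 0))
    + M 0 2 * (M 1 0 * (M 2 1 * M 3 3 - M 2 3 * M 3 1) - M 1 1 * (M 2 0 * M 3 3 - M 2 3 * M 3 0)
      + M 1 3 * (M 2 0 * M 3 1 - M 2 1 * M 3 0))
    - M 0 3 * (M 1 0 * (M 2 1 * M 3 2 - M 2 2 * M 3 1) - M 1 1 * (M 2 0 * M 3 2 - M 2 2 * M 3 0)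
      + M 1 2 * (M 2 0 * M 3 1 - M 2 1 * M 3 0))

lemma det4_eq (M : Matrix (Fin 4) (Fin 4) ℚ) : M.det = det4 M := by
  rw [show M = !![M 0 0, M 0 1, M 0 2, M 0 3; M 1 0, M 1 1, M 1 2, M 1 3;
      M 2 0, M 2 1, M 2 2, M 2 3; M 3 0, M 3 1, M 3 2, M 3 3] by
    ext i j; fin_cases i <;> fin_cases j <;> rfl]
  simp only [Matrix.det_succ_row_zero, Fin.sum_univ_succ, Matrix.det_fin_one,
    Matrix.submatrix_apply, Finset.univ_unique, Fin.default_eq_zero, Finset.sum_singleton,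
    Fin.succAbove, Matrix.cons_val', Matrix.cons_val_zero, Matrix.cons_val_one,
    Matrix.head_cons, Matrix.head_fin_const, Matrix.cons_val_fin_one, Matrix.empty_val',
    Matrix.cons_val_succ, Fin.val_zero, Fin.val_succ, pow_succ, pow_zero, det4]
  norm_num [Fin.lt_def]
  simp only [show (Fin.castSucc 2 : Fin 4) = 2 by rfl, Matrix.cons_val_two, Matrix.tail_cons, Matrix.head_cons]
  simp [Matrix.vecHead, Matrix.vecTail]
  ring

/-- The matrix whose rows are columns `a,b,c,d` of `A8`. -/
def cols (a b c d : Fin 7) : Matrix (Fin 4) (Fin 4) ℚ :=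
  Matrix.of fun i j => A8ᵀ (![a, b, c, d] i) j

/-- The matrix whose rows are columns `a,b,c,d` of `B8`. -/
def colsZ (a b c d : Fin 7) : Matrix (Fin 4) (Fin 4) ℤ :=
  Matrix.of fun i j => B8ᵀ (![a, b, c, d] i) j

lemma det4_colsZ (a b c d : Fin 7) :
    ((det4 (colsZ a b c d) : ℤ) : ℚ) = 10080 ^ 4 * det4 (cols a b c d) := by
  have h : ∀ i j, ((colsZ a b c d i j : ℤ) : ℚ) = 10080 * cols a b c d i j := by
    intro i j
    simp only [colsZ, cols, Matrix.of_apply, Matrix.transpose_apply]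
    exact B8_eq _ _
  simp only [det4, cols, colsZ] at *
  push_cast
  rw [h, h, h, h, h, h, h, h, h, h, h, h, h, h, h, h]
  ring

lemma A8_det_decideZ :
    ∀ a b c d : Fin 7, a < b → b < c → c < d →
      (det4 (colsZ a b c d) ≠ 0 ↔
        ({a, b, c, d} : Finset (Fin 7)) ≠ ({1, 4, 5, 6} : Finset (Fin 7))) := by
  decide

lemma A8_det_decide (a b c d : Fin 7) (hab : a < b) (hbc : b < c) (hcd : c < d) :
    det4 (cols a b c d) ≠ 0 ↔
      ({a, b, c, d} : Finset (Fin 7)) ≠ ({1, 4, 5, 6} : Finset (Fin 7)) := by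
  rw [← A8_det_decideZ a b c d hab hbc hcd]
  have h10080 : ((10080 : ℚ) ^ 4) ≠ 0 := by norm_num
  have hdiv : det4 (cols a b c d) = ((det4 (colsZ a b c d) : ℤ) : ℚ) / 10080 ^ 4 := by
    rw [det4_colsZ]
    field_simp
  rw [hdiv, div_ne_zero_iff]
  simp [h10080, Int.cast_ne_zero]

lemma A8_li_iff (s : Finset (Fin 7)) (h : s.card = 4) :
    LinearIndependent ℚ (fun j : s => A8ᵀ (j : Fin 7)) ↔
      s ≠ ({1, 4, 5, 6} : Finset (Fin 7)) := by
  set f := s.orderEmbOfFin h with hf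
  have hmono : StrictMono f := f.strictMono
  have h01 : f 0 < f 1 := hmono (by decide)
  have h12 : f 1 < f 2 := hmono (by decide)
  have h23 : f 2 < f 3 := hmono (by decide)
  have hmem : ∀ i, f i ∈ s := fun i => Finset.orderEmbOfFin_mem s h i
  have hs : s = ({f 0, f 1, f 2, f 3} : Finset (Fin 7)) := by
    refine (Finset.eq_of_subset_of_card_le ?_ ?_).symm
    · intro x hx
      simp only [Finset.mem_insert, Finset.mem_singleton] at hx
      rcases hx with rfl | rfl | rfl | rfl <;> exact hmem _
    · rw [h]
      have c1 : f 0 ∉ ({f 1, f 2, f 3} : Finset (Fin 7)) := by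
        simp only [Finset.mem_insert, Finset.mem_singleton]
        push_neg
        exact ⟨h01.ne, (h01.trans h12).ne, ((h01.trans h12).trans h23).ne⟩
      have c2 : f 1 ∉ ({f 2, f 3} : Finset (Fin 7)) := by
        simp only [Finset.mem_insert, Finset.mem_singleton]
        push_neg
        exact ⟨h12.ne, (h12.trans h23).ne⟩
      have c3 : f 2 ∉ ({f 3} : Finset (Fin 7)) := by
        simp only [Finset.mem_singleton]
        exact h23.ne
      rw [Finset.card_insert_of_notMem c1, Finset.card_insert_of_notMem c2,
        Finset.card_insert_of_notMem c3, Finset.card_singleton]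
  have hLI : LinearIndependent ℚ (fun j : s => A8ᵀ (j : Fin 7)) ↔
      det4 (cols (f 0) (f 1) (f 2) (f 3)) ≠ 0 := by
    rw [← linearIndependent_equiv (s.orderIsoOfFin h).toEquiv
      (f := fun j : s => A8ᵀ (j : Fin 7))]
    have heq : ((fun j : s => A8ᵀ (j : Fin 7)) ∘ (s.orderIsoOfFin h).toEquiv)
        = fun i : Fin 4 => (cols (f 0) (f 1) (f 2) (f 3)) i := by
      funext i
      have hco : ((s.orderIsoOfFin h) i : Fin 7) = f i := Finset.coe_orderIsoOfFin_apply s h i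
      funext j
      simp only [Function.comp_apply, hco, cols, Matrix.of_apply]
      congr 1
      fin_cases i <;> rfl
    rw [heq, show (fun i : Fin 4 => (cols (f 0) (f 1) (f 2) (f 3)) i) = (cols (f 0) (f 1) (f 2) (f 3)).row from rfl, Matrix.linearIndependent_rows_iff_isUnit, Matrix.isUnit_iff_isUnit_det,
      isUnit_iff_ne_zero, det4_eq]
  rw [hLI, A8_det_decide (f 0) (f 1) (f 2) (f 3) h01 h12 h23, ← hs]

/-- A set of 4 columns of `A₈` is linearly independent over `ℚ` iff it is not the set of
columns `{2,5,6,7}` (here `{1,4,5,6}` in 0-based indexing); in particular exactly 34 of the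
35 four-element subsets of columns form bases of `ℚ⁴`. -/
theorem weight_eight_descendent_matroid :
    (∀ s : Finset (Fin 7), s.card = 4 →
      (LinearIndependent ℚ (fun j : s => A8ᵀ (j : Fin 7)) ↔
        s ≠ ({1, 4, 5, 6} : Finset (Fin 7)))) ∧
    {s : Finset (Fin 7) |
        s.card = 4 ∧ LinearIndependent ℚ (fun j : s => A8ᵀ (j : Fin 7))}.ncard = 34 := by
  refine ⟨fun s h => A8_li_iff s h, ?_⟩
  have hset : {s : Finset (Fin 7) |
        s.card = 4 ∧ LinearIndependent ℚ (fun j : s => A8ᵀ (j : Fin 7))}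
      = ((Finset.univ.powersetCard 4).erase ({1, 4, 5, 6} : Finset (Fin 7)) :
          Finset (Finset (Fin 7))) := by
    ext s
    simp only [Set.mem_setOf_eq, Finset.coe_erase, Set.mem_diff, Finset.mem_coe,
      Finset.mem_powersetCard, Set.mem_singleton_iff]
    constructor
    · rintro ⟨hc, hli⟩
      exact ⟨⟨Finset.subset_univ s, hc⟩, (A8_li_iff s hc).mp hli⟩
    · rintro ⟨⟨-, hc⟩, hne⟩
      exact ⟨hc, (A8_li_iff s hc).mpr hne⟩
  rw [hset, Set.ncard_coe_finset]
  decide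
end

section
/- For all positive even integers k, the number of partitions of k with no part equal to 1 is at least the number of partitions of k/2 into parts of size at most 3, i.e. p(k) − p(k−1) ≥ #{(a,b,c) ∈ ℕ³ : a + 2b + 3c = k/2}. -/
/-!
Removing a part `1` is a bijection from the partitions of `k` containing `1` onto the partitions
of `k - 1`, so `p(k) - p(k - 1)` counts the partitions of `k` without a part `1`. Doubling every
part sends the partitions of `k / 2` injectively into these, and a triple `(a, b, c)` is the
partition `1^a 2^b 3^c` of `k / 2`.
-/

open Finset

namespace Nat.Partition

theorem card_sub_card_pred_eq_card_filter_one_notMem {n : ℕ} (hn : 0 < n) :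
    Fintype.card (Partition n) - Fintype.card (Partition (n - 1)) =
      #{p : Partition n | 1 ∉ p.parts} := by
  have hwith : #{p : Partition n | 1 ∈ p.parts} = Fintype.card (Partition (n - 1)) := by
    rw [← Fintype.card_subtype]
    exact Fintype.card_congr (partitionWithPartEquiv le_rfl hn)
  rw [← hwith, ← Finset.card_univ, ← card_filter_add_card_filter_not (fun p => 1 ∈ p.parts)]
  simp

def double {n : ℕ} (p : Partition n) : Partition (2 * n) where
  parts := p.parts.map (2 * ·)
  parts_pos hi := by
    obtain ⟨j, hj, rfl⟩ := Multiset.mem_map.mp hi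
    exact Nat.mul_pos two_pos (p.parts_pos hj)
  parts_sum := by rw [Multiset.sum_map_mul_left, Multiset.map_id', p.parts_sum]

theorem double_injective {n : ℕ} : Function.Injective (double (n := n)) := fun _ _ h =>
  Partition.ext <| Multiset.map_injective (mul_right_injective₀ two_ne_zero) (congrArg parts h)

theorem one_notMem_double_parts {n : ℕ} (p : Partition n) : 1 ∉ p.double.parts := by
  simp only [double, Multiset.mem_map, not_exists, not_and]
  omega

theorem card_le_card_filter_one_notMem_double (n : ℕ) :
    Fintype.card (Partition n) ≤ #{q : Partition (2 * n) | 1 ∉ q.parts} := by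
  rw [← Finset.card_univ]
  refine card_le_card_of_injOn double (fun p _ => ?_) double_injective.injOn
  simpa using one_notMem_double_parts p

end Nat.Partition

def partsOfTriple (t : ℕ × ℕ × ℕ) : Multiset ℕ :=
  .replicate t.1 1 + .replicate t.2.1 2 + .replicate t.2.2 3

theorem sum_partsOfTriple (t : ℕ × ℕ × ℕ) :
    (partsOfTriple t).sum = t.1 + 2 * t.2.1 + 3 * t.2.2 := by
  simp [partsOfTriple, mul_comm]

theorem partsOfTriple_injective : Function.Injective partsOfTriple := by
  rintro ⟨a, b, c⟩ ⟨a', b', c'⟩ h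
  have count_eq (i : ℕ) := congrArg (Multiset.count i) h
  simp only [partsOfTriple, Multiset.count_add, Multiset.count_replicate] at count_eq
  have := count_eq 1
  have := count_eq 2
  have := count_eq 3
  simp_all

theorem card_filter_weight_le_card_partition (s : Finset (ℕ × ℕ × ℕ)) (m : ℕ) :
    #{t ∈ s | t.1 + 2 * t.2.1 + 3 * t.2.2 = m} ≤ Fintype.card (Nat.Partition m) := by
  calc #{t ∈ s | t.1 + 2 * t.2.1 + 3 * t.2.2 = m}
      ≤ #((univ : Finset (Nat.Partition m)).image Nat.Partition.parts) := by
        refine card_le_card_of_injOn partsOfTriple (fun t ht => ?_) partsOfTriple_injective.injOn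
        have hsum := (mem_filter.mp ht).2
        refine mem_image.mpr ⟨⟨partsOfTriple t, fun {i} hi => ?_, ?_⟩, mem_univ _, rfl⟩
        · simp only [partsOfTriple, Multiset.mem_add, Multiset.mem_replicate] at hi
          omega
        · rw [sum_partsOfTriple, hsum]
    _ = Fintype.card (Nat.Partition m) :=
        card_image_of_injective _ fun _ _ => Nat.Partition.ext

/-- For all positive even integers `k`, the number of partitions of `k` with no part equal
to `1`, which is `p(k) − p(k−1)`, is at least the number of triples `(a,b,c) ∈ ℕ³` with
`a + 2b + 3c = k/2` (the number of partitions of `k/2` into parts of size at most 3). -/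
theorem ground_set_card_ge_dim (k : ℕ) (hk : 0 < k) (hke : Even k) :
    Fintype.card (Nat.Partition k) - Fintype.card (Nat.Partition (k - 1)) ≥
      ((Finset.range (k + 1) ×ˢ Finset.range (k + 1) ×ˢ Finset.range (k + 1)).filter
        (fun t => t.1 + 2 * t.2.1 + 3 * t.2.2 = k / 2)).card := by
  obtain ⟨m, rfl⟩ := even_iff_two_dvd.mp hke
  rw [Nat.Partition.card_sub_card_pred_eq_card_filter_one_notMem hk,
    Nat.mul_div_cancel_left m two_pos]
  calc #{t ∈ range (2 * m + 1) ×ˢ range (2 * m + 1) ×ˢ range (2 * m + 1) |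
          t.1 + 2 * t.2.1 + 3 * t.2.2 = m}
      ≤ Fintype.card (Nat.Partition m) := card_filter_weight_le_card_partition _ m
    _ ≤ #{q : Nat.Partition (2 * m) | 1 ∉ q.parts} :=
        Nat.Partition.card_le_card_filter_one_notMem_double m
end
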